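/- Let s : Fin n × Fin n → ℤ satisfy the cocycle condition s(i,j) + s(j,k) = s(i,k), s(i,i) = 0. For any sequence m : Fin n → ℤ such that m_i ≠ m_j + s(i,j) for all i ≠ j, there exists a permutation σ of Fin n such that the reordered sequence m'_i = m_{σ(i)} + s(i, σ(i)) satisfies m'_i > m'_j + s(i,j) for all i < j (i.e., is in normal form). -/
import Mathlib


/-- Corollary 1 of the paper: if a sequence has no zero pairs
(`m_i ≠ m_j + s(i,j)` for `i ≠ j`), then it can be brought to normal form:
there is a permutation `σ` such that `m'_i = m_{σ(i)} + s(i, σ(i))` satisfies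
`m'_i > m'_j + s(i,j)` for all `i < j`. -/
theorem exists_normal_form {n : ℕ} (s : Fin n → Fin n → ℤ)
    (hcoc : ∀ i j k, s i j + s j k = s i k) (hdiag : ∀ i, s i i = 0)
    (m : Fin n → ℤ) (hnz : ∀ i j, i ≠ j → m i ≠ m j + s i j) :
    ∃ σ : Equiv.Perm (Fin n), ∀ i j : Fin n, i < j →
      m (σ i) + s i (σ i) > (m (σ j) + s j (σ j)) + s i j := by
  rcases Nat.eq_zero_or_pos n with hn | hn
  · subst hn
    exact ⟨1, fun i => i.elim0⟩
  · set k : Fin n := ⟨0, hn⟩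
    set g : Fin n → ℤ := fun i => -(m i - s i k) with hg
    -- s i j = s i k - s j k
    have hs : ∀ i j : Fin n, s i j = s i k - s j k := by
      intro i j
      have := hcoc i j k
      linarith
    have hginj : Function.Injective g := by
      intro i j hij
      by_contra hne
      apply hnz i j hne
      have : m i - s i k = m j - s j k := by
        have := hij; simp only [hg, neg_sub] at this; linarith
      rw [hs i j]; linarith
    refine ⟨Tuple.sort g, fun i j hij => ?_⟩
    have hmono : Monotone (g ∘ Tuple.sort g) := Tuple.monotone_sort g
    have hsm : StrictMono (g ∘ Tuple.sort g) :=
      hmono.strictMono_of_injective (hginj.comp (Tuple.sort g).injective)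
    have := hsm hij
    simp only [Function.comp, hg] at this
    have h1 := hs i (Tuple.sort g i)
    have h2 := hs j (Tuple.sort g j)
    have h3 := hs i j
    linarith
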